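/- arXiv:2605.03203 — 2 statements merged into one kernel-verified Lean document; each statement's English description precedes it below -/
import Mathlib

section
/- As formal power series, ∑_{N≥1} S(N) x^N = x(1−x)^3 / (1 − 5x + 7x^2 − 4x^3), where S(N) is the sliding-weighted sum over compositions of N. -/
/-!
Splitting off the first block `a` of a composition multiplies the sliding product of the rest
by `a + b - 1`, where `b` is the next block. So the series `A = ∑ S(N) xᴺ` (`N ≥ 1`) is tied to
the series `B = ∑_{c} w(c) · (first block of c) x^{|c|}`, and splitting off the first block of the
compositions counted by `B` closes the system:
`(1 - x)² A = x(1 - x) + x² A + x(1 - x) B` and `(1 - x)³ B = x(1 - x) + 2x² A + x(1 - x) B`.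
Eliminating `B` gives `(1 - 5x + 7x² - 4x³) A = x(1 - x)³`.
-/

open PowerSeries

/-- Sliding-product weight `∏_{i=1}^{k-1} (π_i + π_{i+1} - 1)`. -/
def slidingWeight (l : List ℕ) : ℕ :=
  ((l.zip l.tail).map fun p => p.1 + p.2 - 1).prod

/-- `S N`: the sum of the sliding weight over all compositions of `N`. -/
def S (N : ℕ) : ℕ := ∑ c : Composition N, slidingWeight c.blocks

open Finset hiding mk

namespace Composition

theorem sum_zero {M : Type*} [AddCommMonoid M] (f : List ℕ → M) :
    ∑ c : Composition 0, f c.blocks = f [] := by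
  rw [Fintype.sum_eq_single (ones 0) fun c hc => (hc (Composition.ext (by simp))).elim]
  rfl

theorem blocks_ne_nil {n : ℕ} (c : Composition (n + 1)) : c.blocks ≠ [] :=
  c.blocks_eq_nil.not.2 n.succ_ne_zero

theorem headI_pos {n : ℕ} (c : Composition (n + 1)) : 0 < c.blocks.headI :=
  c.blocks_pos (List.head!_mem_self c.blocks_ne_nil)

theorem headI_add_sum_tail {n : ℕ} (c : Composition n) :
    c.blocks.headI + c.blocks.tail.sum = n := by
  conv_rhs => rw [← c.blocks_sum]
  cases c.blocks <;> simp

/-- A composition of `n + 1` is a first block `i + 1` followed by a composition of `n - i`. -/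
def consEquiv (n : ℕ) : Composition (n + 1) ≃ Σ i : Fin (n + 1), Composition (n - i) where
  toFun c := ⟨⟨c.blocks.headI - 1, by have := c.headI_add_sum_tail; omega⟩,
    ⟨c.blocks.tail, fun h => c.blocks_pos (List.mem_of_mem_tail h),
      by have := c.headI_add_sum_tail; have := c.headI_pos; simp only; omega⟩⟩
  invFun p := ⟨(p.1 + 1) :: p.2.blocks, by
      rintro i (_ | ⟨_, h⟩)
      · omega
      · exact p.2.blocks_pos h,
    by have := p.1.2; simp [p.2.blocks_sum]; omega⟩
  left_inv c := by
    ext1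
    simp only
    rw [Nat.sub_add_cancel c.headI_pos]
    exact List.cons_head!_tail c.blocks_ne_nil
  right_inv _ := rfl

theorem sum_succ {M : Type*} [AddCommMonoid M] (f : List ℕ → M) (n : ℕ) :
    ∑ c : Composition (n + 1), f c.blocks
      = ∑ p ∈ antidiagonal n, ∑ c : Composition p.2, f ((p.1 + 1) :: c.blocks) := by
  rw [← (consEquiv n).symm.sum_comp, Fintype.sum_sigma, Nat.sum_antidiagonal_eq_sum_range_succ_mk]
  exact Fin.sum_univ_eq_sum_range (fun i => ∑ c : Composition (n - i), f ((i + 1) :: c.blocks)) _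

end Composition

@[simp] theorem slidingWeight_nil : slidingWeight [] = 1 := rfl

@[simp] theorem slidingWeight_singleton (a : ℕ) : slidingWeight [a] = 1 := rfl

theorem slidingWeight_cons_of_ne_nil (a : ℕ) {l : List ℕ} (hl : l ≠ []) :
    slidingWeight (a :: l) = (a + l.headI - 1) * slidingWeight l := by
  obtain ⟨b, t, rfl⟩ := List.ne_nil_iff_exists_cons.1 hl
  simp [slidingWeight]

variable {R : Type*} [CommRing R]

/-- The empty composition of `0` contributes `g 0`, since `[].headI = 0`. -/
def headWeightedSum (g : ℕ → R) (N : ℕ) : R :=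
  ∑ c : Composition N, slidingWeight c.blocks * g c.blocks.headI

theorem headWeightedSum_zero (g : ℕ → R) : headWeightedSum g 0 = g 0 := by
  simp [headWeightedSum, Composition.sum_zero fun l => (slidingWeight l : R) * g l.headI]

theorem cast_S (N : ℕ) : (S N : R) = headWeightedSum 1 N := by
  simp [S, headWeightedSum]

theorem sum_slidingWeight_cons (i j : ℕ) :
    ∑ c : Composition j, (slidingWeight ((i + 1) :: c.blocks) : R)
      = if j = 0 then 1 else (i : R) * headWeightedSum 1 j + headWeightedSum (↑) j := by
  cases j with
  | zero => simp [Composition.sum_zero fun l => (slidingWeight ((i + 1) :: l) : R)]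
  | succ j =>
    have hcons (c : Composition (j + 1)) :
        (slidingWeight ((i + 1) :: c.blocks) : R)
          = i * (slidingWeight c.blocks * 1) + slidingWeight c.blocks * c.blocks.headI := by
      have := c.headI_pos
      rw [slidingWeight_cons_of_ne_nil _ c.blocks_ne_nil,
        show i + 1 + c.blocks.headI - 1 = i + c.blocks.headI by omega]
      push_cast
      ring
    simp only [hcons, sum_add_distrib, ← mul_sum, headWeightedSum, Pi.one_apply,
      Nat.succ_ne_zero, if_false]

theorem headWeightedSum_succ (g : ℕ → R) (n : ℕ) :
    headWeightedSum g (n + 1) = ∑ p ∈ antidiagonal n, g (p.1 + 1) *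
      (if p.2 = 0 then 1 else (p.1 : R) * headWeightedSum 1 p.2 + headWeightedSum (↑) p.2) := by
  rw [headWeightedSum, Composition.sum_succ fun l => (slidingWeight l : R) * g l.headI]
  refine sum_congr rfl fun p _ => ?_
  simp only [List.headI_cons]
  rw [← sum_mul, sum_slidingWeight_cons, mul_comm]

noncomputable def headWeightedSeries (g : ℕ → R) : R⟦X⟧ :=
  mk fun N => if N = 0 then 0 else headWeightedSum g N

theorem headWeightedSeries_eq (g : ℕ → R) :
    headWeightedSeries g = X * (mk (fun i => (i : R) * g (i + 1)) * headWeightedSeries 1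
      + mk (fun i => g (i + 1)) * (1 + headWeightedSeries (↑))) := by
  ext (_ | n)
  · simp [headWeightedSeries]
  rw [coeff_succ_X_mul]
  simp only [headWeightedSeries, coeff_mk, map_add, coeff_mul, coeff_one,
    Nat.succ_ne_zero, if_false, headWeightedSum_succ, ← sum_add_distrib]
  refine sum_congr rfl fun p _ => ?_
  split_ifs
  · simp
  · ring

namespace PowerSeries

theorem mk_one_sq : (mk 1 : R⟦X⟧) ^ 2 = mk fun i => (i : R) + 1 := by
  rw [mk_one_pow_eq_mk_choose_add]
  ext i
  simp [add_comm]

theorem mk_natCast : (mk fun i => (i : R)) = X * (mk 1) ^ 2 := by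
  rw [mk_one_sq]
  ext (_ | i) <;> simp

theorem mk_natCast_mul_add_one : (mk fun i => (i : R) * (i + 1)) = 2 * X * (mk 1) ^ 3 := by
  rw [mk_one_pow_eq_mk_choose_add, ← map_ofNat C 2, mul_assoc]
  ext (_ | i)
  · simp
  · have h : (i + 1) * (i + 1 + 1) = 2 * (2 + i).choose 2 := by
      have := Nat.add_one_mul_choose_eq (i + 1) 1
      rw [Nat.choose_one_right, add_comm 2 i] at *
      linarith
    rw [coeff_C_mul, coeff_succ_X_mul, coeff_mk, coeff_mk]
    have := congrArg (Nat.cast : ℕ → R) h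
    push_cast at this ⊢
    linear_combination this

end PowerSeries

theorem one_sub_X_sq_mul_headWeightedSeries_one :
    (1 - X) ^ 2 * headWeightedSeries (1 : ℕ → R)
      = X * (1 - X) + X ^ 2 * headWeightedSeries 1
        + X * (1 - X) * headWeightedSeries (↑) := by
  have hU : (mk 1 : R⟦X⟧) * (1 - X) = 1 := mk_one_mul_one_sub_eq_one R
  have h := headWeightedSeries_eq (1 : ℕ → R)
  simp only [Pi.one_apply, mul_one, mk_natCast] at h
  linear_combination (1 - X) ^ 2 * h + (X ^ 2 * headWeightedSeries 1 * (mk 1 * (1 - X) + 1)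
    + X * (1 - X) * (1 + headWeightedSeries (↑))) * hU

theorem one_sub_X_pow_three_mul_headWeightedSeries_natCast :
    (1 - X) ^ 3 * headWeightedSeries ((↑) : ℕ → R)
      = X * (1 - X) + 2 * X ^ 2 * headWeightedSeries 1
        + X * (1 - X) * headWeightedSeries (↑) := by
  have hU : (mk 1 : R⟦X⟧) * (1 - X) = 1 := mk_one_mul_one_sub_eq_one R
  have h := headWeightedSeries_eq ((↑) : ℕ → R)
  simp only [Nat.cast_add, Nat.cast_one, ← mk_one_sq, mk_natCast_mul_add_one] at h
  linear_combination (1 - X) ^ 3 * h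
    + (2 * X ^ 2 * headWeightedSeries 1 * ((mk 1 * (1 - X)) ^ 2 + mk 1 * (1 - X) + 1)
      + X * (1 - X) * (1 + headWeightedSeries (↑)) * (mk 1 * (1 - X) + 1)) * hU

theorem generatingFunction_headWeightedSeries_one :
    ((1 : R⟦X⟧) - 5 * X + 7 * X ^ 2 - 4 * X ^ 3) * headWeightedSeries (1 : ℕ → R)
      = X * (1 - X) ^ 3 := by
  linear_combination ((1 - X) ^ 2 - X) * one_sub_X_sq_mul_headWeightedSeries_one (R := R)
    + X * one_sub_X_pow_three_mul_headWeightedSeries_natCast (R := R)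

/-- As formal power series over ℚ,
`∑_{N≥1} S(N) xᴺ = x(1−x)³ / (1 − 5x + 7x² − 4x³)`, stated as
`(1 − 5x + 7x² − 4x³) · ∑_{N≥1} S(N) xᴺ = x(1−x)³`. -/
theorem generating_function_rowConvex :
    ((1 : ℚ⟦X⟧) - 5 * X + 7 * X ^ 2 - 4 * X ^ 3) *
        PowerSeries.mk (fun N => if N = 0 then (0 : ℚ) else (S N : ℚ))
      = X * (1 - X) ^ 3 := by
  simpa only [headWeightedSeries, cast_S] using generatingFunction_headWeightedSeries_one (R := ℚ)
end

section
/- With S(x) = ∑_{m≥1} F_m(x) and R(x) = ∑_{m≥1} m·F_m(x) as formal power series, the transfer relations imply S(x)·(1 − 2x) = x(1 − x)(1 + R(x)), i.e., S = x(1−x)(1+R)/(1−2x). -/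
open PowerSeries

/-- `F m`: the power series whose coefficient of `xᴺ` is the sum of the
sliding weight over compositions of `N` whose last part equals `m`. -/
noncomputable def F (m : ℕ) : ℚ⟦X⟧ :=
  PowerSeries.mk fun N =>
    ((∑ c : Composition N,
        if c.blocks.getLast? = some m then slidingWeight c.blocks else 0 : ℕ) : ℚ)

/-- `S(x) = ∑_{m≥1} F_m(x)`, defined coefficientwise (only `m ≤ N` contribute
to the coefficient of `xᴺ` since `F_m` has order at least `m`). -/
noncomputable def Sx : ℚ⟦X⟧ :=
  PowerSeries.mk fun N => ∑ m ∈ Finset.Icc 1 N, (PowerSeries.coeff (R := ℚ) N) (F m)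

/-- `R(x) = ∑_{m≥1} m·F_m(x)`, defined coefficientwise. -/
noncomputable def Rx : ℚ⟦X⟧ :=
  PowerSeries.mk fun N => ∑ m ∈ Finset.Icc 1 N, (m : ℚ) * (PowerSeries.coeff (R := ℚ) N) (F m)

/-!
Removing the last part `m` of a composition with at least two parts leaves a composition whose
last part `ℓ` contributes the factor `ℓ + m - 1` to the sliding weight. This gives the transfer
relation `F_m = x^m (1 + R + (m - 1) S)`. Summing it over `m` with `∑ x^m = x/(1-x)` and
`∑ m x^m = x/(1-x)^2` gives `S = x(1 + R)/(1 - x) + x^2 S/(1 - x)^2`, and clearing denominators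
gives the claim.
-/

theorem slidingWeight_cons_cons (a b : ℕ) (l : List ℕ) :
    slidingWeight (a :: b :: l) = (a + b - 1) * slidingWeight (b :: l) := by
  simp [slidingWeight]

theorem slidingWeight_append_singleton {l : List ℕ} (hl : l ≠ []) (m : ℕ) :
    slidingWeight (l ++ [m]) = slidingWeight l * (l.getLastD 0 + m - 1) := by
  induction l with
  | nil => exact absurd rfl hl
  | cons a t ih =>
    cases t with
    | nil => simp [slidingWeight]
    | cons b t =>
      rw [List.cons_append, List.cons_append, slidingWeight_cons_cons, ← List.cons_append,
        ih (List.cons_ne_nil b t), slidingWeight_cons_cons]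
      simp [mul_assoc]

def Composition.concat {k m : ℕ} (c : Composition k) (hm : 0 < m) : Composition (k + m) where
  blocks := c.blocks ++ [m]
  blocks_pos hi := by
    rcases List.mem_append.1 hi with hi | hi
    · exact c.blocks_pos hi
    · rw [List.mem_singleton.1 hi]; exact hm
  blocks_sum := by simp [c.blocks_sum]

theorem Composition.sum_ite_getLast?_eq_some {M : Type*} [AddCommMonoid M] {k m : ℕ}
    (hm : 0 < m) (f : List ℕ → M) :
    ∑ c : Composition (k + m), (if c.blocks.getLast? = some m then f c.blocks else 0) =
      ∑ c : Composition k, f (c.blocks ++ [m]) := by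
  rw [← Finset.sum_filter]
  symm
  refine Finset.sum_bij (fun c _ => c.concat hm) (fun c _ => ?_) (fun c _ d _ h => ?_)
    (fun c hc => ?_) (fun _ _ => rfl)
  · simp [Composition.concat]
  · exact Composition.ext (List.append_cancel_right (congrArg Composition.blocks h))
  · have hlast : c.blocks.dropLast ++ [m] = c.blocks :=
      List.dropLast_append_getLast? m (by simpa using hc)
    refine ⟨⟨c.blocks.dropLast, fun hi => c.blocks_pos (List.dropLast_sublist _ |>.mem hi), ?_⟩,
      Finset.mem_univ _, Composition.ext hlast⟩
    have hsum := c.blocks_sum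
    rw [← hlast, List.sum_append] at hsum
    simpa using hsum

theorem coeff_natCast_sub_one_mul {R : Type*} [CommRing R] (m n : ℕ) (P : R⟦X⟧) :
    coeff n (((m : R⟦X⟧) - 1) * P) = ((m : R) - 1) * coeff n P := by
  rw [← map_natCast (C (R := R)), ← map_one (C (R := R)), ← map_sub, coeff_C_mul]

theorem coeff_mul_eq_sum_Icc {R : Type*} [CommSemiring R] {A : R⟦X⟧} (hA : constantCoeff A = 0)
    (P : R⟦X⟧) (N : ℕ) :
    coeff N (A * P) = ∑ m ∈ Finset.Icc 1 N, coeff m A * coeff (N - m) P := by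
  rw [coeff_mul, Finset.Nat.sum_antidiagonal_eq_sum_range_succ (fun i j => coeff i A * coeff j P),
    Finset.sum_range_eq_add_Ico _ N.succ_pos, coeff_zero_eq_constantCoeff_apply, hA, zero_mul,
    zero_add, Nat.succ_eq_add_one, Finset.Ico_add_one_right_eq_Icc]

theorem coeff_X_mul_mk_one {R : Type*} [Semiring R] {m : ℕ} (hm : 1 ≤ m) :
    coeff m (X * mk 1 : R⟦X⟧) = 1 := by
  obtain ⟨n, rfl⟩ := Nat.exists_eq_add_of_le' hm
  simp

theorem coeff_X_mul_mk_one_sq {R : Type*} [CommRing R] (m : ℕ) :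
    coeff m (X * mk 1 ^ 2 : R⟦X⟧) = m := by
  rcases m with _ | n
  · simp
  · rw [coeff_succ_X_mul, show 2 = 1 + 1 from rfl, mk_one_pow_eq_mk_choose_add, coeff_mk,
      Nat.choose_one_right, add_comm]

theorem sum_Icc_mul_coeff_F (g : ℕ → ℚ) {N : ℕ} (hN : 1 ≤ N) :
    ∑ m ∈ Finset.Icc 1 N, g m * coeff N (F m) =
      ∑ c : Composition N, g (c.blocks.getLastD 0) * slidingWeight c.blocks := by
  simp only [F, coeff_mk, Nat.cast_sum, Nat.cast_ite, Nat.cast_zero, Finset.mul_sum]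
  rw [Finset.sum_comm]
  refine Finset.sum_congr rfl fun c _ => ?_
  have hne : c.blocks ≠ [] := by rw [Ne, c.blocks_eq_nil]; omega
  have hlast : c.blocks.getLast hne ∈ Finset.Icc 1 N :=
    Finset.mem_Icc.2 ⟨c.one_le_blocks (List.getLast_mem hne), c.blocks_le (List.getLast_mem hne)⟩
  simp only [List.getLast?_eq_some_getLast hne, List.getLastD_eq_getLast?, Option.getD_some,
    Option.some.injEq, mul_ite, mul_zero, Finset.sum_ite_eq, if_pos hlast]

theorem coeff_Sx {N : ℕ} (hN : 1 ≤ N) :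
    coeff N Sx = ∑ c : Composition N, (slidingWeight c.blocks : ℚ) := by
  simpa [Sx] using sum_Icc_mul_coeff_F 1 hN

theorem coeff_Rx {N : ℕ} (hN : 1 ≤ N) :
    coeff N Rx = ∑ c : Composition N, (c.blocks.getLastD 0 * slidingWeight c.blocks : ℚ) := by
  simpa [Rx] using sum_Icc_mul_coeff_F (fun m => m) hN

theorem coeff_F_of_lt {m N : ℕ} (h : N < m) : coeff N (F m) = 0 := by
  rw [F, coeff_mk, Nat.cast_eq_zero]
  refine Finset.sum_eq_zero fun c _ => if_neg fun hc => ?_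
  have hle := c.blocks_le (List.mem_of_getLast? hc)
  omega

theorem F_eq_X_pow_mul {m : ℕ} (hm : 1 ≤ m) :
    F m = X ^ m * (1 + Rx + ((m : ℚ⟦X⟧) - 1) * Sx) := by
  ext N
  rw [coeff_X_pow_mul']
  split_ifs with hmN
  swap
  · exact coeff_F_of_lt (not_le.1 hmN)
  obtain ⟨k, rfl⟩ := Nat.exists_eq_add_of_le' hmN
  rw [F, coeff_mk, Composition.sum_ite_getLast?_eq_some hm, Nat.add_sub_cancel]
  rcases Nat.eq_zero_or_pos k with rfl | hk
  · have hnil (c : Composition 0) : c.blocks = [] := c.blocks_eq_nil.2 rfl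
    simp [hnil, slidingWeight, composition_card, Rx, Sx, coeff_zero_eq_constantCoeff]
  · have hne (c : Composition k) : c.blocks ≠ [] := by rw [Ne, c.blocks_eq_nil]; omega
    simp only [slidingWeight_append_singleton (hne _), Nat.add_sub_assoc hm, map_add,
      coeff_natCast_sub_one_mul, coeff_one, if_neg hk.ne', coeff_Sx hk, coeff_Rx hk, Finset.mul_sum]
    push_cast [Nat.cast_sub hm]
    rw [zero_add, ← Finset.sum_add_distrib]
    exact Finset.sum_congr rfl fun c _ => by ring

theorem Sx_eq_of_transfer :
    Sx = X * mk 1 * (1 + Rx) + (X * mk 1 ^ 2 - X * mk 1) * Sx := by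
  ext N
  have hconst : constantCoeff (X * mk 1 : ℚ⟦X⟧) = 0 := by simp
  rw [map_add, coeff_mul_eq_sum_Icc hconst, coeff_mul_eq_sum_Icc (by simp [hconst]),
    ← Finset.sum_add_distrib]
  nth_rw 1 [Sx]
  rw [coeff_mk]
  refine Finset.sum_congr rfl fun m hm => ?_
  obtain ⟨hm1, hmN⟩ := Finset.mem_Icc.1 hm
  rw [F_eq_X_pow_mul hm1, coeff_X_pow_mul', if_pos hmN, map_sub, coeff_X_mul_mk_one_sq,
    coeff_X_mul_mk_one hm1, map_add, coeff_natCast_sub_one_mul, one_mul]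

/-- The transfer relations imply `S(x)·(1 − 2x) = x(1 − x)(1 + R(x))`. -/
theorem S_closed_relation : Sx * (1 - 2 * X) = X * (1 - X) * (1 + Rx) := by
  have hgeom : (mk 1 : ℚ⟦X⟧) * (1 - X) = 1 := mk_one_mul_one_sub_eq_one ℚ
  have hcleared : Sx * (1 - X) ^ 2 = X * (1 - X) * (1 + Rx) * (mk 1 * (1 - X)) +
      X * Sx * ((mk 1 * (1 - X)) ^ 2 - mk 1 * (1 - X) * (1 - X)) := by
    linear_combination (1 - X) ^ 2 * Sx_eq_of_transfer
  rw [hgeom] at hcleared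
  linear_combination hcleared
end
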